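/- The global defensive alliance number of P₃ ∘ P₃ equals 4. -/

import Mathlib

/-- Lexicographic product of simple graphs. -/
def lexProd {α β : Type*} (G : SimpleGraph α) (H : SimpleGraph β) :
    SimpleGraph (α × β) where
  Adj x y := G.Adj x.1 y.1 ∨ (x.1 = y.1 ∧ H.Adj x.2 y.2)
  symm := ⟨by
    rintro x y (h | ⟨h1, h2⟩)
    · exact Or.inl h.symm
    · exact Or.inr ⟨h1.symm, h2.symm⟩⟩
  loopless := ⟨by
    rintro x (h | ⟨_, h2⟩)
    · exact G.irrefl h
    · exact H.irrefl h2⟩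

/-- Closed neighborhood N[v]. -/
def closedNbhd {α : Type*} (G : SimpleGraph α) (v : α) : Set α :=
  insert v (G.neighborSet v)

/-- A defensive alliance: every vertex of S is defended. -/
def IsDefensiveAlliance {α : Type*} (G : SimpleGraph α) (S : Set α) : Prop :=
  ∀ v ∈ S, ((closedNbhd G v) \ S).ncard ≤ ((closedNbhd G v) ∩ S).ncard

/-- A global defensive alliance: a defensive alliance which is also dominating. -/
def IsGDA {α : Type*} (G : SimpleGraph α) (S : Set α) : Prop :=
  IsDefensiveAlliance G S ∧ ∀ v, v ∈ S ∨ ∃ u ∈ S, G.Adj v u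

/-- The global defensive alliance number. -/
noncomputable def gdaNumber {α : Type*} (G : SimpleGraph α) : ℕ :=
  sInf {k | ∃ S : Set α, IsGDA G S ∧ S.ncard = k}

/-- Number of vertices of S in the j-th copy of G² (copies indexed 1,…,n). -/
noncomputable def copyCount {n m : ℕ} (S : Set (Fin n × Fin m)) (j : ℕ) : ℕ :=
  (S ∩ {p | (p.1 : ℕ) + 1 = j}).ncard


/-! A vertex of the middle copy of P₃ in P₃∘P₃ has at least 7 vertices in its closed neighbourhood
and every other vertex at least 5, while a defended vertex must see at least half of its closed
neighbourhood inside the alliance. Hence an alliance of at most 3 vertices misses the middle copy,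
so it contains, and therefore equals, one outer copy, which leaves the other outer copy undominated.
One outer copy together with one middle vertex is a global defensive alliance of size 4. -/

open SimpleGraph Set

instance (n : ℕ) : DecidableRel (pathGraph n).Adj := fun _ _ =>
  decidable_of_iff' _ pathGraph_adj

instance {α β : Type*} [DecidableEq α] (G : SimpleGraph α) (H : SimpleGraph β)
    [DecidableRel G.Adj] [DecidableRel H.Adj] : DecidableRel (lexProd G H).Adj := fun _ _ =>
  inferInstanceAs (Decidable (_ ∨ _ ∧ _))

section Alliance

variable {α : Type*} {G : SimpleGraph α}

def closedNbhdFinset [Fintype α] [DecidableEq α] (G : SimpleGraph α) [DecidableRel G.Adj]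
    (v : α) : Finset α :=
  insert v (G.neighborFinset v)

theorem coe_closedNbhdFinset [Fintype α] [DecidableEq α] [DecidableRel G.Adj] (v : α) :
    (closedNbhdFinset G v : Set α) = closedNbhd G v := by
  rw [closedNbhdFinset, closedNbhd, Finset.coe_insert, coe_neighborFinset]

theorem ncard_closedNbhd [Fintype α] [DecidableEq α] [DecidableRel G.Adj] (v : α) :
    (closedNbhd G v).ncard = (closedNbhdFinset G v).card := by
  rw [← coe_closedNbhdFinset, ncard_coe_finset]

theorem isDefensiveAlliance_coe_iff [Fintype α] [DecidableEq α] [DecidableRel G.Adj]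
    (T : Finset α) :
    IsDefensiveAlliance G T ↔
      ∀ v ∈ T, (closedNbhdFinset G v \ T).card ≤ (closedNbhdFinset G v ∩ T).card := by
  simp only [IsDefensiveAlliance, ← coe_closedNbhdFinset, ← Finset.coe_sdiff,
    ← Finset.coe_inter, ncard_coe_finset, Finset.mem_coe]

theorem isGDA_coe_iff [Fintype α] [DecidableEq α] [DecidableRel G.Adj] (T : Finset α) :
    IsGDA G T ↔
      (∀ v ∈ T, (closedNbhdFinset G v \ T).card ≤ (closedNbhdFinset G v ∩ T).card) ∧
        ∀ v, v ∈ T ∨ ∃ u ∈ T, G.Adj v u := by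
  simp only [IsGDA, isDefensiveAlliance_coe_iff, Finset.mem_coe]

theorem IsDefensiveAlliance.ncard_closedNbhd_le [Finite α] {S : Set α}
    (hS : IsDefensiveAlliance G S) {v : α} (hv : v ∈ S) :
    (closedNbhd G v).ncard ≤ 2 * (closedNbhd G v ∩ S).ncard := by
  have := ncard_inter_add_ncard_sdiff_eq_ncard (closedNbhd G v) S
  have := hS v hv
  omega

theorem IsGDA.exists_mem_closedNbhd {S : Set α} (hS : IsGDA G S) (u : α) :
    ∃ w ∈ S, w ∈ closedNbhd G u := by
  rcases hS.2 u with hu | ⟨w, hw, hadj⟩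
  · exact ⟨u, hu, mem_insert u _⟩
  · exact ⟨w, hw, mem_insert_of_mem u hadj⟩

theorem gdaNumber_eq {S : Set α} {k : ℕ} (hS : IsGDA G S) (hk : S.ncard = k)
    (hmin : ∀ T, IsGDA G T → k ≤ T.ncard) : gdaNumber G = k :=
  le_antisymm (Nat.sInf_le ⟨S, hS, hk⟩)
    (le_csInf ⟨k, S, hS, hk⟩ fun _ ⟨T, hT, hTk⟩ => hTk ▸ hmin T hT)

end Alliance

theorem fst_mem_closedNbhd_of_mem_closedNbhd_lexProd {α β : Type*} {G : SimpleGraph α}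
    {H : SimpleGraph β} {v w : α × β} (h : w ∈ closedNbhd (lexProd G H) v) :
    w.1 ∈ closedNbhd G v.1 := by
  rcases h with rfl | hadj | ⟨heq, -⟩
  · exact mem_insert _ _
  · exact mem_insert_of_mem _ hadj
  · exact heq ▸ mem_insert _ _

theorem eq_or_eq_one_of_mem_closedNbhd_pathGraph_three {i j : Fin 3} (hi : i ≠ 1)
    (h : j ∈ closedNbhd (pathGraph 3) i) : j = i ∨ j = 1 := by
  revert i j
  simp only [closedNbhd, mem_insert_iff, mem_neighborSet]
  decide

theorem exists_not_mem_closedNbhd_pathGraph_three {i : Fin 3} (hi : i ≠ 1) :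
    ∃ i', i ∉ closedNbhd (pathGraph 3) i' := by
  revert i
  simp only [closedNbhd, mem_insert_iff, mem_neighborSet]
  decide

namespace LexProdPathThree

local notation "P₃∘P₃" => lexProd (pathGraph 3) (pathGraph 3)

theorem seven_le_ncard_closedNbhd_one (j : Fin 3) : 7 ≤ (closedNbhd P₃∘P₃ (1, j)).ncard := by
  rw [ncard_closedNbhd]
  revert j
  decide

theorem five_le_ncard_closedNbhd (v : Fin 3 × Fin 3) : 5 ≤ (closedNbhd P₃∘P₃ v).ncard := by
  rw [ncard_closedNbhd]
  revert v
  decide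

theorem four_le_ncard_of_isGDA {S : Set (Fin 3 × Fin 3)} (hS : IsGDA P₃∘P₃ S) :
    4 ≤ S.ncard := by
  by_contra! hS3
  have hmid : ∀ v ∈ S, v.1 ≠ 1 := by
    rintro ⟨i, j⟩ hv rfl
    have := hS.1.ncard_closedNbhd_le hv
    have := ncard_le_ncard (inter_subset_right (s := closedNbhd P₃∘P₃ (1, j)) (t := S))
    have := seven_le_ncard_closedNbhd_one j
    omega
  obtain ⟨v, hv, -⟩ := hS.exists_mem_closedNbhd (0, 0)
  have hrow : closedNbhd P₃∘P₃ v ∩ S ⊆ S ∩ {w | w.1 = v.1} := by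
    rintro w ⟨hwN, hwS⟩
    refine ⟨hwS, ?_⟩
    rcases eq_or_eq_one_of_mem_closedNbhd_pathGraph_three (hmid v hv)
      (fst_mem_closedNbhd_of_mem_closedNbhd_lexProd hwN) with h | h
    · exact h
    · exact absurd h (hmid w hwS)
  have hSrow : S ⊆ {w | w.1 = v.1} := by
    have := hS.1.ncard_closedNbhd_le hv
    have := five_le_ncard_closedNbhd v
    have := ncard_le_ncard hrow
    rw [← eq_of_subset_of_ncard_le (s := S ∩ {w | w.1 = v.1}) inter_subset_left (by omega)]
    exact inter_subset_right
  obtain ⟨i', hi'⟩ := exists_not_mem_closedNbhd_pathGraph_three (hmid v hv)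
  obtain ⟨w, hwS, hw⟩ := hS.exists_mem_closedNbhd (i', 0)
  exact hi' (hSrow hwS ▸ fst_mem_closedNbhd_of_mem_closedNbhd_lexProd hw)

theorem isGDA_row_zero_insert :
    IsGDA P₃∘P₃ ↑({(0, 0), (0, 1), (0, 2), (1, 0)} : Finset (Fin 3 × Fin 3)) := by
  rw [isGDA_coe_iff]
  decide

end LexProdPathThree

theorem stmt_8 :
    gdaNumber (lexProd (SimpleGraph.pathGraph 3) (SimpleGraph.pathGraph 3)) = 4 :=
  gdaNumber_eq LexProdPathThree.isGDA_row_zero_insert (by rw [ncard_coe_finset]; rfl)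
    fun _ => LexProdPathThree.four_le_ncard_of_isGDA
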